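/- arXiv:1907.03185 — 7 statements merged into one kernel-verified Lean document; each statement's English description precedes it below -/
import Mathlib

section
/- Let Δ' and Δ̂ be as in the context, and assume the positive system Δ⁺ is invariant, i.e. for every α ∈ Δ⁺ ∩ Δ̂ and every β ∈ Δ' such that α + β is a root, one has α + β ∈ Δ⁺ ∩ Δ̂. Let Σ denote the set of simple roots, i.e. the elements of Δ⁺ that cannot be written as a sum of two elements of Δ⁺. Then every root in Δ' is an integer linear combination of the simple roots lying in Δ', i.e. of elements of Σ ∩ Δ'. -/
/-- Let `𝔤` be a finite-dimensional complex semisimple Lie algebra,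
`𝔥` a Cartan subalgebra, `Δ ⊆ 𝔥*` the set of roots, `Δ⁺` a positive system, `λ ∈ 𝔥*`,
`Δ' = {α ∈ Δ : (α,λ) = 0}` and `Δ̂ = Δ ∖ Δ'` (where `(·,·)` is induced by the Killing
form).  Assume `Δ⁺` is invariant: for `α ∈ Δ⁺ ∩ Δ̂` and `β ∈ Δ'` with `α + β` a root,
`α + β ∈ Δ⁺ ∩ Δ̂`.  Let `Σ` be the simple roots (elements of `Δ⁺` which are not sums
of two elements of `Δ⁺`).  Then every root in `Δ'` is an integer linear combination
of elements of `Σ ∩ Δ'`. -/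
theorem stmt0
    {L : Type} [LieRing L] [LieAlgebra ℂ L] [FiniteDimensional ℂ L]
    [LieAlgebra.IsSemisimple ℂ L]
    (H : LieSubalgebra ℂ L) [H.IsCartanSubalgebra]
    -- `Δ` is the set of roots of `𝔤` with respect to `𝔥`
    (Δ : Set (Module.Dual ℂ H))
    (hΔ : Δ = {α | α ≠ 0 ∧ ∃ X : L, X ≠ 0 ∧ ∀ h : H, ⁅(h : L), X⁆ = α h • X})
    -- `t β ∈ 𝔥` represents `β` via the Killing form, and `pair` is the induced pairing
    (t : Module.Dual ℂ H → H)
    (ht : ∀ β : Module.Dual ℂ H, ∀ h : H, killingForm ℂ L (t β : L) (h : L) = β h)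
    (pair : Module.Dual ℂ H → Module.Dual ℂ H → ℂ)
    (hpair : ∀ β γ, pair β γ = killingForm ℂ L (t β : L) (t γ : L))
    (lam : Module.Dual ℂ H)
    -- `Δ⁺` is a positive system
    (Δp : Set (Module.Dual ℂ H))
    (hsub : Δp ⊆ Δ) (hunion : Δp ∪ -Δp = Δ) (hdisj : Δp ∩ -Δp = ∅)
    (hsum : ∀ l : List (Module.Dual ℂ H), l ≠ [] → (∀ x ∈ l, x ∈ Δp) →
      l.sum ∈ Δ → l.sum ∈ Δp)
    -- `Δ'` and `Δ̂`
    (Δ' Δhat : Set (Module.Dual ℂ H))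
    (hΔ' : Δ' = {α ∈ Δ | pair α lam = 0}) (hΔhat : Δhat = Δ \ Δ')
    -- invariance of the ordering
    (hinv : ∀ α ∈ Δp ∩ Δhat, ∀ β ∈ Δ', α + β ∈ Δ → α + β ∈ Δp ∩ Δhat)
    -- the simple roots
    (Sgm : Set (Module.Dual ℂ H))
    (hSgm : Sgm = {α ∈ Δp | ¬ ∃ β ∈ Δp, ∃ γ ∈ Δp, α = β + γ}) :
    ∀ α ∈ Δ', α ∈ Submodule.span ℤ (Sgm ∩ Δ') := by
  classical
  -- linearity of `pair (·) lam`
  have hpl : ∀ β : Module.Dual ℂ H, pair β lam = β (t lam) := fun β => by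
    rw [hpair]; exact ht β (t lam)
  -- roots are nonzero
  have hne : ∀ α ∈ Δ, α ≠ (0 : Module.Dual ℂ H) := fun α hα => by
    rw [hΔ] at hα; exact hα.1
  -- negation stays in Δ
  have hneg : ∀ α ∈ Δ, -α ∈ Δ := by
    intro α hα
    rw [← hunion] at hα ⊢
    rcases hα with h | h
    · right; simpa using h
    · left; simpa using h
  -- Δ is finite
  have hfin : Δ.Finite := by
    have hS : {χ : H → ℂ | LieModule.genWeightSpace L χ ≠ ⊥}.Finite :=
      LieModule.finite_genWeightSpace_ne_bot ℂ H L
    have hsubΔ : Δ ⊆ (fun (α : Module.Dual ℂ H) => (α : H → ℂ)) ⁻¹'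
        {χ : H → ℂ | LieModule.genWeightSpace L χ ≠ ⊥} := by
      intro α hα
      rw [hΔ] at hα
      obtain ⟨-, X, hX0, hX⟩ := hα
      intro hbot
      apply hX0
      have hmem : X ∈ LieModule.genWeightSpace L (α : H → ℂ) := by
        rw [LieModule.mem_genWeightSpace]
        intro x
        refine ⟨1, ?_⟩
        simp only [pow_one, LinearMap.sub_apply, LieModule.toEnd_apply_apply,
          LinearMap.smul_apply, Module.End.one_apply, LieSubalgebra.coe_bracket_of_module,
          hX x, sub_self]
      rw [hbot] at hmem
      simpa using hmem
    have hinj : Function.Injective (fun (α : Module.Dual ℂ H) => (α : H → ℂ)) := by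
      intro a b hab
      exact LinearMap.ext fun x => congrFun hab x
    exact (hS.preimage hinj.injOn).subset hsubΔ
  -- no nonempty list of positive roots sums to zero
  have hzsum : ∀ l : List (Module.Dual ℂ H), l ≠ [] → (∀ x ∈ l, x ∈ Δp) → l.sum ≠ 0 := by
    intro l hl hmem h0
    cases l with
    | nil => exact hl rfl
    | cons γ l' =>
      have hγ : γ ∈ Δp := hmem γ (by simp)
      by_cases hl' : l' = []
      · subst hl'
        simp only [List.sum_cons, List.sum_nil, add_zero] at h0
        exact hne γ (hsub hγ) h0
      · have hsum' : l'.sum = -γ := by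
          have : γ + l'.sum = 0 := by simpa using h0
          exact eq_neg_of_add_eq_zero_right this
        have hmg : -γ ∈ Δ := hneg γ (hsub hγ)
        have : l'.sum ∈ Δp := hsum l' hl' (fun x hx => hmem x (by simp [hx]))
          (by rw [hsum']; exact hmg)
        rw [hsum'] at this
        have hcontra : γ ∈ Δp ∩ -Δp := ⟨hγ, by simpa using this⟩
        rw [hdisj] at hcontra
        exact hcontra
  -- the relation "is a proper summand"
  have : Finite ↥Δp := (hfin.subset hsub).to_subtype
  set r : ↥Δp → ↥Δp → Prop :=
    fun β α => ∃ γ ∈ Δp, (α : Module.Dual ℂ H) = (β : Module.Dual ℂ H) + γ with hr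
  have htg : ∀ a b : ↥Δp, Relation.TransGen r a b →
      ∃ l : List (Module.Dual ℂ H), l ≠ [] ∧ (∀ x ∈ l, x ∈ Δp) ∧
        (b : Module.Dual ℂ H) = (a : Module.Dual ℂ H) + l.sum := by
    intro a b h
    induction h with
    | single h =>
      obtain ⟨γ, hγ, he⟩ := h
      exact ⟨[γ], by simp, by simpa using hγ, by simpa using he⟩
    | tail _ h ih =>
      obtain ⟨γ, hγ, he⟩ := h
      obtain ⟨l, hl0, hlm, hls⟩ := ih
      refine ⟨γ :: l, by simp, ?_, ?_⟩
      · intro x hx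
        rcases List.mem_cons.mp hx with h | h
        · rw [h]; exact hγ
        · exact hlm x h
      · rw [he, hls]
        simp only [List.sum_cons]
        abel
  have hirr : ∀ a : ↥Δp, ¬ Relation.TransGen r a a := by
    intro a h
    obtain ⟨l, hl0, hlm, hls⟩ := htg a a h
    exact hzsum l hl0 hlm (left_eq_add.mp hls)
  have wf : WellFounded r := by
    haveI : IsTrans ↥Δp (Relation.TransGen r) := inferInstance
    haveI : IsIrrefl ↥Δp (Relation.TransGen r) := ⟨hirr⟩
    exact Subrelation.wf (fun h => Relation.TransGen.single h)
      (Finite.wellFounded_of_trans_of_irrefl (Relation.TransGen r))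
  -- the key claim for positive roots
  have key : ∀ a : ↥Δp, pair (a : Module.Dual ℂ H) lam = 0 →
      (a : Module.Dual ℂ H) ∈ Submodule.span ℤ (Sgm ∩ Δ') := by
    intro a
    refine wf.induction
      (C := fun a : ↥Δp => pair (a : Module.Dual ℂ H) lam = 0 →
        (a : Module.Dual ℂ H) ∈ Submodule.span ℤ (Sgm ∩ Δ')) a ?_
    intro x ih hx0
    set α : Module.Dual ℂ H := (x : Module.Dual ℂ H) with hαdef
    have hαΔp : α ∈ Δp := x.2
    have hαΔ' : α ∈ Δ' := by rw [hΔ']; exact ⟨hsub hαΔp, hx0⟩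
    by_cases hs : α ∈ Sgm
    · exact Submodule.subset_span ⟨hs, hαΔ'⟩
    · rw [hSgm] at hs
      simp only [Set.mem_setOf_eq, not_and, not_not] at hs
      obtain ⟨β, hβ, γ, hγ, hαβγ⟩ := hs hαΔp
      -- β (hence γ) pairs to zero with lam
      have hβ0 : pair β lam = 0 := by
        by_contra hb
        have hβhat : β ∈ Δhat := by
          rw [hΔhat]
          refine ⟨hsub hβ, fun hmem => hb ?_⟩
          rw [hΔ'] at hmem; exact hmem.2
        have hma : -α ∈ Δ' := by
          rw [hΔ']
          refine ⟨hneg α (hsub hαΔp), ?_⟩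
          rw [hpl] at hx0 ⊢
          simp [hx0]
        have he : β + -α = -γ := by
          rw [hαβγ]; abel
        have hroot : β + -α ∈ Δ := by
          rw [he]; exact hneg γ (hsub hγ)
        have hres := hinv β ⟨hβ, hβhat⟩ (-α) hma hroot
        have hmg : -γ ∈ Δp := by rw [← he]; exact hres.1
        have hcontra : γ ∈ Δp ∩ -Δp := ⟨hγ, by simpa using hmg⟩
        rw [hdisj] at hcontra
        exact hcontra
      have hγ0 : pair γ lam = 0 := by
        have happ : α (t lam) = β (t lam) + γ (t lam) := by
          rw [hαβγ]; simp
        rw [hpl] at hx0 hβ0 ⊢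
        rw [happ, hβ0, zero_add] at hx0
        exact hx0
      have hrβ : r ⟨β, hβ⟩ x := ⟨γ, hγ, hαβγ⟩
      have hrγ : r ⟨γ, hγ⟩ x := ⟨β, hβ, by show α = γ + β; rw [hαβγ]; abel⟩
      have hβs := ih ⟨β, hβ⟩ hrβ hβ0
      have hγs := ih ⟨γ, hγ⟩ hrγ hγ0
      rw [hαβγ]
      exact Submodule.add_mem _ hβs hγs
  -- conclude
  intro α hα
  rw [hΔ'] at hα
  obtain ⟨hαΔ, h0⟩ := hα
  rw [← hunion] at hαΔ
  rcases hαΔ with h | h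
  · exact key ⟨α, h⟩ h0
  · have h' : -α ∈ Δp := by simpa using h
    have h0' : pair (-α) lam = 0 := by
      rw [hpl] at h0 ⊢
      simp [h0]
    have := key ⟨-α, h'⟩ h0'
    have := Submodule.neg_mem (Submodule.span ℤ (Sgm ∩ Δ')) this
    simpa using this
end

section
/- Let (Δ')⁺ be a positive system for Δ', i.e. (Δ')⁺ ∪ (−(Δ')⁺) = Δ', (Δ')⁺ ∩ (−(Δ')⁺) = ∅, and any sum of elements of (Δ')⁺ that lies in Δ' lies in (Δ')⁺. Define Δ⁺ := (Δ')⁺ ∪ {α ∈ Δ̂ : Re (α,λ) > 0} ∪ {α ∈ Δ̂ : (α,λ) ∈ i·ℝ_{>0}}. Then Δ⁺ is a positive system for Δ, and it is invariant: for every α ∈ Δ⁺ ∩ Δ̂ and every β ∈ Δ' such that α + β is a root, one has α + β ∈ Δ⁺ ∩ Δ̂. -/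
/-!
Send a root `α` to `(Re (α,λ), Im (α,λ))`, ordered lexicographically. Since `(α,λ) = α(t_λ)`, this
is an additive map `f` into a linearly ordered group, `Δ'` is the set of roots killed by `f`, and
`Δ⁺` is `(Δ')⁺` together with the roots on which `f` is positive. For any such `f`, and any set of
roots with `Δ = -Δ`, this recipe turns a positive system of `Δ'` into one of `Δ`: a sum of elements
with `f ≥ 0` has `f = 0` only if every summand does. Invariance holds because `f (α + β) = f α`
for `β ∈ Δ'`. The only Lie theory needed is `Δ = -Δ`, which holds because a complex semisimple
Lie algebra has nondegenerate Killing form.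
-/

namespace LieAlgebra.IsKilling

variable {K L : Type*} [Field K] [PerfectField K] [LieRing L] [LieAlgebra K L] [FiniteDimensional K L]
  [IsKilling K L] {H : LieSubalgebra K L} [H.IsCartanSubalgebra] [LieModule.IsTriangularizable K H L]

lemma exists_ne_zero_lie_eq_neg_smul {α : H → K} {x : L} (hx₀ : x ≠ 0)
    (hx : ∀ h : H, ⁅(h : L), x⁆ = α h • x) :
    ∃ y : L, y ≠ 0 ∧ ∀ h : H, ⁅(h : L), y⁆ = -α h • y := by
  have hx_mem : x ∈ rootSpace H α :=
    LieModule.weightSpace_le_genWeightSpace L α ((LieModule.mem_weightSpace _ _).2 hx)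
  let β : LieModule.Weight K H L := ⟨α, fun h ↦ hx₀ (by simpa [h] using hx_mem)⟩
  obtain ⟨y, hy, hy₀⟩ := (-β).exists_ne_zero
  exact ⟨y, hy₀, lie_eq_smul_of_mem_rootSpace hy⟩

end LieAlgebra.IsKilling

def Complex.toLexReIm : ℂ →+ Lex (ℝ × ℝ) where
  toFun z := toLex (z.re, z.im)
  map_zero' := rfl
  map_add' _ _ := rfl

lemma Complex.toLexReIm_apply (z : ℂ) : toLexReIm z = toLex (z.re, z.im) := rfl

lemma Complex.toLexReIm_pos_iff {z : ℂ} : 0 < toLexReIm z ↔ 0 < z.re ∨ z.re = 0 ∧ 0 < z.im := by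
  rw [toLexReIm_apply, ← toLex_zero, Prod.Lex.toLex_lt_toLex, Prod.fst_zero, Prod.snd_zero, eq_comm]

lemma Complex.toLexReIm_injective : Function.Injective toLexReIm := fun z w h ↦ by
  simpa [toLexReIm_apply, Complex.ext_iff] using h

lemma Complex.exists_pos_mul_I_iff {z : ℂ} : (∃ r : ℝ, 0 < r ∧ z = r * I) ↔ z.re = 0 ∧ 0 < z.im := by
  constructor
  · rintro ⟨r, hr, rfl⟩
    simpa using hr
  · rintro ⟨hre, him⟩
    exact ⟨z.im, him, Complex.ext (by simpa using hre) (by simp)⟩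

section PositiveSystem

variable {V : Type*} [AddCommGroup V]

structure IsPositiveSystem (Φ P : Set V) : Prop where
  union_neg : P ∪ -P = Φ
  inter_neg : P ∩ -P = ∅
  list_sum_mem : ∀ l : List V, l ≠ [] → (∀ x ∈ l, x ∈ P) → l.sum ∈ Φ → l.sum ∈ P

namespace IsPositiveSystem

variable {Φ P : Set V}

lemma subset (hP : IsPositiveSystem Φ P) : P ⊆ Φ :=
  hP.union_neg ▸ Set.subset_union_left

lemma notMem_neg (hP : IsPositiveSystem Φ P) {x : V} (hx : x ∈ P) : -x ∉ P := fun hx' ↦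
  (Set.eq_empty_iff_forall_notMem.1 hP.inter_neg) x ⟨hx, Set.mem_neg.2 hx'⟩

variable {Γ : Type*} [AddCommGroup Γ] [LinearOrder Γ]

lemma union_pos_inter_ne_zero {f : V →+ Γ} (hP : IsPositiveSystem {α ∈ Φ | f α = 0} P) :
    (P ∪ {α ∈ Φ | 0 < f α}) ∩ {α ∈ Φ | f α ≠ 0} = {α ∈ Φ | 0 < f α} := by
  refine subset_antisymm ?_ fun x hx ↦ ⟨Or.inr hx, hx.1, hx.2.ne'⟩
  rintro x ⟨hx | hx, hx'⟩
  exacts [absurd (hP.subset hx).2 hx'.2, hx]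

variable [IsOrderedAddMonoid Γ]

theorem union_pos (hΦ : ∀ α ∈ Φ, -α ∈ Φ) (f : V →+ Γ)
    (hP : IsPositiveSystem {α ∈ Φ | f α = 0} P) :
    IsPositiveSystem Φ (P ∪ {α ∈ Φ | 0 < f α}) := by
  have hPΦ : ∀ x ∈ P, x ∈ Φ ∧ f x = 0 := hP.subset
  have nonneg : ∀ x ∈ P ∪ {α ∈ Φ | 0 < f α}, 0 ≤ f x := by
    rintro x (hx | hx)
    exacts [(hPΦ x hx).2.ge, hx.2.le]
  have mem_of_eq_zero : ∀ x ∈ P ∪ {α ∈ Φ | 0 < f α}, f x = 0 → x ∈ P := by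
    rintro x (hx | hx) h
    exacts [hx, absurd h hx.2.ne']
  refine ⟨?_, ?_, ?_⟩
  · refine subset_antisymm (Set.union_subset ?_ ?_) fun x hx ↦ ?_
    · exact Set.union_subset (fun x hx ↦ (hPΦ x hx).1) fun x hx ↦ hx.1
    · rintro x (hx | hx)
      · simpa using hΦ _ (hPΦ _ hx).1
      · simpa using hΦ _ hx.1
    rcases lt_trichotomy (f x) 0 with h | h | h
    · exact Or.inr (Or.inr ⟨hΦ x hx, by simpa using h⟩)
    · have h' : x ∈ P ∪ -P := hP.union_neg.symm ▸ ⟨hx, h⟩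
      rcases h' with h' | h'
      exacts [Or.inl (Or.inl h'), Or.inr (Or.inl h')]
    · exact Or.inl (Or.inr ⟨hx, h⟩)
  · refine Set.eq_empty_iff_forall_notMem.2 fun x ⟨hx, hx'⟩ ↦ ?_
    have h₀ : f x = 0 := le_antisymm (by simpa using nonneg _ hx') (nonneg x hx)
    exact hP.notMem_neg (mem_of_eq_zero x hx h₀) (mem_of_eq_zero _ hx' (by simp [h₀]))
  · intro l hl hmem hsum
    have hf_sum : f l.sum = (l.map f).sum := map_list_sum f l
    have hmap : ∀ y ∈ l.map f, 0 ≤ y := by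
      simpa using fun x hx ↦ nonneg x (hmem x hx)
    rcases (List.sum_nonneg hmap).lt_or_eq with h | h
    · exact Or.inr ⟨hsum, hf_sum ▸ h⟩
    have hzero : ∀ x ∈ l, f x = 0 := fun x hx ↦
      le_antisymm (h ▸ List.single_le_sum hmap _ (List.mem_map_of_mem hx)) (nonneg x (hmem x hx))
    exact Or.inl (hP.list_sum_mem l hl (fun x hx ↦ mem_of_eq_zero x (hmem x hx) (hzero x hx))
      ⟨hsum, hf_sum.trans h.symm⟩)

end IsPositiveSystem

end PositiveSystem

/-- Let `𝔤` be a finite-dimensional complex semisimple Lie algebra,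
`𝔥` a Cartan subalgebra, `Δ ⊆ 𝔥*` the set of roots, `λ ∈ 𝔥*`,
`Δ' = {α ∈ Δ : (α,λ) = 0}` and `Δ̂ = Δ ∖ Δ'`.  Let `(Δ')⁺` be a positive system for
`Δ'` and set `Δ⁺ := (Δ')⁺ ∪ {α ∈ Δ̂ : Re (α,λ) > 0} ∪ {α ∈ Δ̂ : (α,λ) ∈ i·ℝ_{>0}}`.
Then `Δ⁺` is a positive system for `Δ`, and it is invariant: for every
`α ∈ Δ⁺ ∩ Δ̂` and every `β ∈ Δ'` such that `α + β` is a root, `α + β ∈ Δ⁺ ∩ Δ̂`. -/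
theorem stmt1
    {L : Type} [LieRing L] [LieAlgebra ℂ L] [FiniteDimensional ℂ L]
    [LieAlgebra.IsSemisimple ℂ L]
    (H : LieSubalgebra ℂ L) [H.IsCartanSubalgebra]
    -- `Δ` is the set of roots of `𝔤` with respect to `𝔥`
    (Δ : Set (Module.Dual ℂ H))
    (hΔ : Δ = {α | α ≠ 0 ∧ ∃ X : L, X ≠ 0 ∧ ∀ h : H, ⁅(h : L), X⁆ = α h • X})
    -- `t β ∈ 𝔥` represents `β` via the Killing form, and `pair` is the induced pairing
    (t : Module.Dual ℂ H → H)
    (ht : ∀ β : Module.Dual ℂ H, ∀ h : H, killingForm ℂ L (t β : L) (h : L) = β h)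
    (pair : Module.Dual ℂ H → Module.Dual ℂ H → ℂ)
    (hpair : ∀ β γ, pair β γ = killingForm ℂ L (t β : L) (t γ : L))
    (lam : Module.Dual ℂ H)
    -- `Δ'` and `Δ̂`
    (Δ' Δhat : Set (Module.Dual ℂ H))
    (hΔ' : Δ' = {α ∈ Δ | pair α lam = 0}) (hΔhat : Δhat = Δ \ Δ')
    -- `(Δ')⁺` is a positive system for `Δ'`
    (Δ'p : Set (Module.Dual ℂ H))
    (h'union : Δ'p ∪ -Δ'p = Δ') (h'disj : Δ'p ∩ -Δ'p = ∅)
    (h'sum : ∀ l : List (Module.Dual ℂ H), l ≠ [] → (∀ x ∈ l, x ∈ Δ'p) →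
      l.sum ∈ Δ' → l.sum ∈ Δ'p)
    -- the definition of `Δ⁺`
    (Δp : Set (Module.Dual ℂ H))
    (hΔp : Δp = Δ'p ∪ {α ∈ Δhat | 0 < (pair α lam).re}
        ∪ {α ∈ Δhat | ∃ r : ℝ, 0 < r ∧ pair α lam = (r : ℂ) * Complex.I}) :
    -- `Δ⁺` is a positive system for `Δ` ...
    (Δp ⊆ Δ ∧ Δp ∪ -Δp = Δ ∧ Δp ∩ -Δp = ∅ ∧
      (∀ l : List (Module.Dual ℂ H), l ≠ [] → (∀ x ∈ l, x ∈ Δp) →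
        l.sum ∈ Δ → l.sum ∈ Δp))
    -- ... and it is invariant
    ∧ (∀ α ∈ Δp ∩ Δhat, ∀ β ∈ Δ', α + β ∈ Δ → α + β ∈ Δp ∩ Δhat) := by
  have hneg : ∀ α ∈ Δ, -α ∈ Δ := by
    rw [hΔ]
    rintro α ⟨hα₀, x, hx₀, hx⟩
    simpa [hα₀] using LieAlgebra.IsKilling.exists_ne_zero_lie_eq_neg_smul hx₀ hx
  let f : Module.Dual ℂ H →+ Lex (ℝ × ℝ) :=
    Complex.toLexReIm.comp (Module.Dual.eval ℂ H (t lam)).toAddMonoidHom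
  have hf : ∀ α, f α = Complex.toLexReIm (pair α lam) := fun α ↦ by
    simp [f, hpair, ht]
  have hf₀ : ∀ α, f α = 0 ↔ pair α lam = 0 := fun α ↦ by
    rw [hf, map_eq_zero_iff _ Complex.toLexReIm_injective]
  have hΔ'f : Δ' = {α ∈ Δ | f α = 0} := by simp only [hΔ', hf₀]
  have hΔhatf : Δhat = {α ∈ Δ | f α ≠ 0} := by
    ext α
    simp only [hΔhat, hΔ'f, Set.mem_sdiff, Set.mem_ofPred_eq]
    tauto
  have hΔpf : Δp = Δ'p ∪ {α ∈ Δ | 0 < f α} := by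
    ext α
    have hf_ne : 0 < f α → f α ≠ 0 := ne_of_gt
    rw [hf, Complex.toLexReIm_pos_iff] at hf_ne
    simp only [hΔp, hΔhatf, Set.mem_union, Set.mem_ofPred_eq, hf, Complex.toLexReIm_pos_iff,
      Complex.exists_pos_mul_I_iff]
    tauto
  have hΔ'p : IsPositiveSystem {α ∈ Δ | f α = 0} Δ'p := hΔ'f ▸ ⟨h'union, h'disj, h'sum⟩
  have hΔpp : IsPositiveSystem Δ Δp := hΔpf ▸ hΔ'p.union_pos hneg f
  refine ⟨⟨hΔpp.subset, hΔpp.union_neg, hΔpp.inter_neg, hΔpp.list_sum_mem⟩, ?_⟩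
  rw [hΔpf, hΔhatf, hΔ'f, hΔ'p.union_pos_inter_ne_zero]
  rintro α ⟨-, hα⟩ β ⟨-, hβ⟩ hαβ
  exact ⟨hαβ, by simpa [hβ] using hα⟩
end

section
/- Assume λ(μ) ≠ 0 for every μ ∈ ℕ₀Δ̂⁺ ∖ {0} satisfying ½(μ,μ) = (ρ,μ). Then the set P := {0} ∪ {ħ ∈ ℂ ∖ {0} : p_{iλ/ħ}(μ) = 0 for some μ ∈ ℕ₀Δ̂⁺ ∖ {0}} is countable, and every accumulation point of P in ℂ equals 0. -/
/-!
For `ħ ≠ 0`, the equation `p_{iλ/ħ}(μ) = 0` forces `ħ = i λ(μ) / q(μ)` with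
`q(μ) = ½(μ,μ) − (ρ,μ)`; the hypothesis on `λ` excludes the case `q(μ) = 0`. So `P ∖ {0}` is
the image of the countable set `ℕ₀Δ̂⁺` under `μ ↦ i λ(μ) / q(μ)`. Since `λ` grows linearly and `q`
quadratically, `|λ(μ) / q(μ)| ≥ ε` confines `μ` to a ball, and a ball contains only finitely many
points of `ℕ₀Δ̂⁺`: pairing with `ξ` bounds every coefficient. Hence `P` has only finitely many
points outside each disc around `0`.
-/

open Filter Topology Bornology Complex
open scoped InnerProductSpace

section NatCombinations

variable {E : Type*}

def natCombinations [AddCommGroup E] [Module ℝ E] (s : Finset E) : Set E :=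
  {μ | ∃ c : E → ℕ, μ = ∑ β ∈ s, (c β : ℝ) • β}

lemma natCombinations_subset_range [AddCommGroup E] [Module ℝ E] (s : Finset E) :
    natCombinations s ⊆ Set.range fun d : s → ℕ => ∑ β : s, (d β : ℝ) • (β : E) := by
  rintro μ ⟨c, rfl⟩
  exact ⟨fun β => c β, Finset.sum_coe_sort s fun β => (c β : ℝ) • β⟩

lemma countable_natCombinations [AddCommGroup E] [Module ℝ E] (s : Finset E) :
    (natCombinations s).Countable :=
  (Set.countable_range _).mono (natCombinations_subset_range s)

variable [NormedAddCommGroup E] [InnerProductSpace ℝ E]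

lemma coeff_mul_inner_le_inner_sum {s : Finset E} {ξ : E} (hξ : ∀ β ∈ s, 0 < ⟪ξ, β⟫_ℝ)
    (c : E → ℕ) {β : E} (hβ : β ∈ s) :
    (c β : ℝ) * ⟪ξ, β⟫_ℝ ≤ ⟪ξ, ∑ b ∈ s, (c b : ℝ) • b⟫_ℝ := by
  rw [inner_sum]
  simp only [real_inner_smul_right]
  exact Finset.single_le_sum (f := fun b => (c b : ℝ) * ⟪ξ, b⟫_ℝ)
    (fun b hb => mul_nonneg (Nat.cast_nonneg _) (hξ b hb).le) hβ

lemma finite_natCombinations_inter_of_isBounded {s : Finset E} {ξ : E}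
    (hξ : ∀ β ∈ s, 0 < ⟪ξ, β⟫_ℝ) {B : Set E} (hB : IsBounded B) :
    (natCombinations s ∩ B).Finite := by
  obtain ⟨R, hR⟩ := hB.subset_closedBall 0
  set bound : s → ℕ := fun β => ⌈‖ξ‖ * R / ⟪ξ, (β : E)⟫_ℝ⌉₊
  refine ((Set.Finite.pi fun β => Set.finite_Iic (bound β)).image
    fun d : s → ℕ => ∑ β : s, (d β : ℝ) • (β : E)).subset ?_
  rintro μ ⟨⟨c, rfl⟩, hμB⟩
  refine ⟨fun β => c β, fun β _ => ?_, Finset.sum_coe_sort s fun β => (c β : ℝ) • β⟩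
  have hμR : ⟪ξ, ∑ b ∈ s, (c b : ℝ) • b⟫_ℝ ≤ ‖ξ‖ * R :=
    (real_inner_le_norm _ _).trans
      (mul_le_mul_of_nonneg_left (mem_closedBall_zero_iff.1 (hR hμB)) (norm_nonneg ξ))
  have hc : (c β : ℝ) ≤ ‖ξ‖ * R / ⟪ξ, (β : E)⟫_ℝ := by
    rw [le_div_iff₀ (hξ β β.2)]
    exact (coeff_mul_inner_le_inner_sum hξ c β.2).trans hμR
  exact Set.mem_Iic.2 (by exact_mod_cast hc.trans (Nat.le_ceil _))

end NatCombinations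

section ShiftedQuad

variable {E : Type*} [NormedAddCommGroup E] [InnerProductSpace ℝ E]

/-- The `ħ`-independent part of `p_{iλ/ħ}(μ)`. -/
noncomputable def shiftedQuad (ρ μ : E) : ℝ := 1 / 2 * ⟪μ, μ⟫_ℝ - ⟪ρ, μ⟫_ℝ

lemma norm_mul_sub_le_shiftedQuad (ρ μ : E) : ‖μ‖ * (‖μ‖ / 2 - ‖ρ‖) ≤ shiftedQuad ρ μ := by
  rw [shiftedQuad, real_inner_self_eq_norm_sq]
  linarith [real_inner_le_norm ρ μ]

lemma tendsto_norm_div_abs_shiftedQuad {F : Type*} [NormedAddCommGroup F] [NormedSpace ℝ F]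
    (ρ : E) (lam : E →L[ℝ] F) :
    Tendsto (fun μ => ‖lam μ‖ / |shiftedQuad ρ μ|) (cobounded E) (𝓝 0) := by
  have hlin : Tendsto (fun r : ℝ => r / 2 - ‖ρ‖) atTop atTop :=
    tendsto_atTop_add_const_right _ _ (tendsto_id.atTop_div_const two_pos)
  refine squeeze_zero' (Eventually.of_forall fun μ => by positivity) ?_
    (((tendsto_const_nhds (x := ‖lam‖)).div_atTop hlin).comp tendsto_norm_cobounded_atTop)
  filter_upwards [tendsto_norm_cobounded_atTop.eventually_gt_atTop (2 * ‖ρ‖)] with μ hμ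
  have hgap : 0 < ‖μ‖ / 2 - ‖ρ‖ := by linarith
  have hq : ‖μ‖ * (‖μ‖ / 2 - ‖ρ‖) ≤ |shiftedQuad ρ μ| :=
    (norm_mul_sub_le_shiftedQuad ρ μ).trans (le_abs_self _)
  have hμ0 : 0 < ‖μ‖ := by linarith [norm_nonneg ρ]
  calc ‖lam μ‖ / |shiftedQuad ρ μ| ≤ ‖lam‖ * ‖μ‖ / (‖μ‖ * (‖μ‖ / 2 - ‖ρ‖)) :=
        div_le_div₀ (by positivity) (lam.le_opNorm μ) (by positivity) hq
    _ = ‖lam‖ / (‖μ‖ / 2 - ‖ρ‖) := by field_simp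

end ShiftedQuad

lemma isBounded_setOf_le_norm_of_tendsto_cobounded {E F : Type*} [Bornology E]
    [SeminormedAddCommGroup F] {g : E → F} (hg : Tendsto g (cobounded E) (𝓝 0)) {ε : ℝ}
    (hε : 0 < ε) : IsBounded {x | ε ≤ ‖g x‖} := by
  rw [isBounded_def]
  filter_upwards [hg.norm (Iio_mem_nhds (by simpa using hε))] with x hx
  simpa using hx

lemma eq_I_mul_div_of_sub_I_div_mul_eq_zero {ħ l : ℂ} {q : ℝ} (hħ : ħ ≠ 0)
    (hl : q = 0 → l ≠ 0) (h : (q : ℂ) - I / ħ * l = 0) : ħ = I * l / q := by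
  have hq : q ≠ 0 := by
    rintro rfl
    exact hl rfl (by simpa [hħ] using h)
  rw [eq_div_iff (ofReal_ne_zero.2 hq)]
  field_simp at h
  linear_combination h

lemma eq_zero_of_accPt_of_finite_le_norm {F : Type*} [NormedAddCommGroup F] {P : Set F}
    (hP : ∀ ε > 0, {w ∈ P | ε ≤ ‖w‖}.Finite) {z : F} (hz : AccPt z (𝓟 P)) : z = 0 := by
  by_contra hz0
  have hε : 0 < ‖z‖ / 2 := half_pos (norm_pos_iff.2 hz0)
  refine (Set.Infinite.of_accPt (hz.nhds_inter (Metric.ball_mem_nhds z hε))) ((hP _ hε).subset ?_)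
  rintro w ⟨hw, hwP⟩
  have hzw := norm_sub_norm_le z w
  rw [Metric.mem_ball, dist_eq_norm, norm_sub_rev] at hw
  exact ⟨hwP, by linarith⟩

theorem stmt5_general {E : Type} [NormedAddCommGroup E] [InnerProductSpace ℝ E]
    [FiniteDimensional ℝ E]
    (Δhat : Finset E)
    (hhalf : ∃ ξ : E, ∀ β ∈ Δhat, 0 < (inner ℝ ξ β : ℝ))
    (ρ : E) (lam : E →ₗ[ℝ] ℂ)
    (p : ℂ → E → ℂ)
    (hp : ∀ hbar μ, p hbar μ = (1/2 : ℂ) * ((inner ℝ μ μ : ℝ) : ℂ) - ((inner ℝ ρ μ : ℝ) : ℂ)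
        - (Complex.I / hbar) * lam μ)
    (NΔ : Set E)
    (hNΔ : NΔ = {μ | ∃ c : E → ℕ, μ = ∑ β ∈ Δhat, (c β : ℝ) • β})
    (hlam : ∀ μ ∈ NΔ, μ ≠ 0 → (1/2 : ℝ) * (inner ℝ μ μ : ℝ) = (inner ℝ ρ μ : ℝ) → lam μ ≠ 0)
    (P : Set ℂ)
    (hP : P = {0} ∪ {hbar | hbar ≠ 0 ∧ ∃ μ ∈ NΔ, μ ≠ 0 ∧ p hbar μ = 0}) :
    P.Countable ∧ ∀ z : ℂ, AccPt z (Filter.principal P) → z = 0 := by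
  obtain ⟨ξ, hξ⟩ := hhalf
  change NΔ = natCombinations Δhat at hNΔ
  subst hNΔ hP
  set f : E → ℂ := fun μ => I * lam μ / shiftedQuad ρ μ
  have hPf : {0} ∪ {ħ | ħ ≠ 0 ∧ ∃ μ ∈ natCombinations Δhat, μ ≠ 0 ∧ p ħ μ = 0} ⊆
      insert 0 (f '' natCombinations Δhat) := by
    rintro ħ (rfl | ⟨hħ, μ, hμ, hμ0, hpμ⟩)
    · exact Set.mem_insert 0 _
    refine Or.inr ⟨μ, hμ, (eq_I_mul_div_of_sub_I_div_mul_eq_zero hħ ?_ ?_).symm⟩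
    · intro hq
      exact hlam μ hμ hμ0 (by rw [shiftedQuad] at hq; linarith)
    · rw [hp] at hpμ
      rw [← hpμ, shiftedQuad]
      push_cast
      ring
  refine ⟨((countable_natCombinations Δhat).image f).insert 0 |>.mono hPf,
    fun z hz => eq_zero_of_accPt_of_finite_le_norm (fun ε hε => ?_) hz⟩
  have hfar : IsBounded {μ | ε ≤ ‖f μ‖} := by
    refine isBounded_setOf_le_norm_of_tendsto_cobounded
      (tendsto_zero_iff_norm_tendsto_zero.2 ?_) hε
    convert tendsto_norm_div_abs_shiftedQuad ρ (LinearMap.toContinuousLinearMap lam) using 2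
    simp [f]
  refine ((finite_natCombinations_inter_of_isBounded hξ hfar).image f).subset ?_
  rintro w ⟨hw, hεw⟩
  obtain rfl | ⟨μ, hμ, rfl⟩ := hPf hw
  · rw [norm_zero] at hεw
    exact absurd hεw (not_le.2 hε)
  · exact ⟨μ, ⟨hμ, hεw⟩, rfl⟩

/-- Let `E` be a finite-dimensional real inner product space,
`Δ̂⁺ ⊆ E ∖ {0}` a finite set contained in an open half-space, `ρ ∈ E` and
`λ : E → ℂ` an `ℝ`-linear map.  Set `p_{iλ/hbar}(μ) = ½(μ,μ) − (ρ,μ) − (i/hbar)·λ(μ)`.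
If `λ(μ) ≠ 0` for every `μ ∈ ℕ₀Δ̂⁺ ∖ {0}` with `½(μ,μ) = (ρ,μ)`, then
`P = {0} ∪ {hbar ≠ 0 : p_{iλ/hbar}(μ) = 0 for some μ ∈ ℕ₀Δ̂⁺ ∖ {0}}` is countable and
its only possible accumulation point in `ℂ` is `0`. -/
theorem stmt5 {E : Type} [NormedAddCommGroup E] [InnerProductSpace ℝ E]
    [FiniteDimensional ℝ E]
    (Δhat : Finset E) (hΔ0 : (0 : E) ∉ Δhat)
    (hhalf : ∃ ξ : E, ∀ β ∈ Δhat, 0 < (inner ℝ ξ β : ℝ))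
    (ρ : E) (lam : E →ₗ[ℝ] ℂ)
    (p : ℂ → E → ℂ)
    (hp : ∀ hbar μ, p hbar μ = (1/2 : ℂ) * ((inner ℝ μ μ : ℝ) : ℂ) - ((inner ℝ ρ μ : ℝ) : ℂ)
        - (Complex.I / hbar) * lam μ)
    (NΔ : Set E)
    (hNΔ : NΔ = {μ | ∃ c : E → ℕ, μ = ∑ β ∈ Δhat, (c β : ℝ) • β})
    (hlam : ∀ μ ∈ NΔ, μ ≠ 0 → (1/2 : ℝ) * (inner ℝ μ μ : ℝ) = (inner ℝ ρ μ : ℝ) → lam μ ≠ 0)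
    (P : Set ℂ)
    (hP : P = {0} ∪ {hbar | hbar ≠ 0 ∧ ∃ μ ∈ NΔ, μ ≠ 0 ∧ p hbar μ = 0}) :
    P.Countable ∧ ∀ z : ℂ, AccPt z (Filter.principal P) → z = 0 :=
  stmt5_general Δhat hhalf ρ lam p hp NΔ hNΔ hlam P hP
end

section
/- There exist constants C > 0 and M ∈ ℕ such that for every λ ∈ K and every μ = Σ_{i=1}^r c_i α_i with c_i ∈ ℕ₀ and n := Σ_{i=1}^r c_i ≥ M, one has |½(μ,μ) − (ρ,μ) − λ(μ)| ≥ C·n². -/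
/-!
Write `μ = ∑ cᵢ αᵢ` and `n = ∑ cᵢ`. Since every `(ρ, αᵢ)` is at least some `δ > 0`, we get
`δ n ≤ (ρ, μ) ≤ ‖ρ‖ ‖μ‖`, so `‖μ‖` grows at least linearly in `n`. Compactness bounds `‖λ‖`
on `K` by some `B`, and the real part of the expression is at least
`½‖μ‖² - (‖ρ‖ + B) ‖μ‖`, which dominates `‖μ‖² / 4` once `‖μ‖ ≥ 4 (‖ρ‖ + B)`.
-/

open Finset

section InnerProductSpace

variable {E : Type*} [NormedAddCommGroup E] [InnerProductSpace ℝ E]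

lemma norm_sq_div_four_le_norm_half_inner_self_sub (ρ μ : E) (lam : E →L[ℝ] ℂ)
    (hμ : 4 * (‖ρ‖ + ‖lam‖) ≤ ‖μ‖) :
    ‖μ‖ ^ 2 / 4 ≤
      ‖(1/2 : ℂ) * ((inner ℝ μ μ : ℝ) : ℂ) - ((inner ℝ ρ μ : ℝ) : ℂ) - lam μ‖ := by
  set z : ℂ := (1/2 : ℂ) * ((inner ℝ μ μ : ℝ) : ℂ) - ((inner ℝ ρ μ : ℝ) : ℂ) - lam μ
  have hre : z.re = ‖μ‖ ^ 2 / 2 - inner ℝ ρ μ - (lam μ).re := by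
    simp only [z, real_inner_self_eq_norm_sq, Complex.sub_re, Complex.mul_re, Complex.ofReal_re,
      Complex.ofReal_im]
    norm_num
    ring
  have hρμ : inner ℝ ρ μ ≤ ‖ρ‖ * ‖μ‖ := real_inner_le_norm ρ μ
  have hlamμ : (lam μ).re ≤ ‖lam‖ * ‖μ‖ := (Complex.re_le_norm _).trans (lam.le_opNorm μ)
  calc ‖μ‖ ^ 2 / 4 ≤ z.re := by nlinarith [norm_nonneg ρ, norm_nonneg lam]
    _ ≤ ‖z‖ := Complex.re_le_norm z

lemma mul_sum_le_inner_sum_smul {ι : Type*} (s : Finset ι) (ρ : E) (α : ι → E) {δ : ℝ}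
    (hδ : ∀ i ∈ s, δ ≤ inner ℝ ρ (α i)) {c : ι → ℝ} (hc : ∀ i ∈ s, 0 ≤ c i) :
    δ * ∑ i ∈ s, c i ≤ inner ℝ ρ (∑ i ∈ s, c i • α i) := by
  rw [inner_sum, mul_sum]
  refine sum_le_sum fun i hi => ?_
  rw [real_inner_smul_right, mul_comm δ]
  exact mul_le_mul_of_nonneg_left (hδ i hi) (hc i hi)

lemma exists_pos_mul_sum_le_norm_sum_smul {ι : Type*} [Fintype ι] (ρ : E) (α : ι → E)
    (hρ : ∀ i, 0 < inner ℝ ρ (α i)) :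
    ∃ ε > 0, ∀ c : ι → ℝ, (∀ i, 0 ≤ c i) → ε * ∑ i, c i ≤ ‖∑ i, c i • α i‖ := by
  obtain ⟨⟨δ, hδ⟩, hδle⟩ := Finite.exists_ge fun i => (⟨inner ℝ ρ (α i), hρ i⟩ : {x : ℝ // 0 < x})
  refine ⟨δ / (‖ρ‖ + 1), by positivity, fun c hc => ?_⟩
  set μ := ∑ i, c i • α i
  have hlower : δ * ∑ i, c i ≤ inner ℝ ρ μ :=
    mul_sum_le_inner_sum_smul _ ρ α (fun i _ => hδle i) (fun i _ => hc i)
  have hupper : inner ℝ ρ μ ≤ (‖ρ‖ + 1) * ‖μ‖ :=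
    (real_inner_le_norm ρ μ).trans (by nlinarith [norm_nonneg μ])
  rw [div_mul_eq_mul_div, div_le_iff₀ (by positivity), mul_comm ‖μ‖]
  exact hlower.trans hupper

end InnerProductSpace

theorem stmt6_general {E : Type} [NormedAddCommGroup E] [InnerProductSpace ℝ E]
    {r : ℕ} (α : Fin r → E) (ρ : E) (hρ : ∀ i, 0 < (inner ℝ ρ (α i) : ℝ))
    (K : Set (E →L[ℝ] ℂ)) (hK : IsCompact K) :
    ∃ C > (0 : ℝ), ∃ M : ℕ,
      ∀ lam ∈ K, ∀ c : Fin r → ℕ, M ≤ ∑ i, c i →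
        C * ((∑ i, c i : ℕ) : ℝ) ^ 2 ≤
          ‖(1/2 : ℂ) *
              ((inner ℝ (∑ i, (c i : ℝ) • α i) (∑ i, (c i : ℝ) • α i) : ℝ) : ℂ)
            - ((inner ℝ ρ (∑ i, (c i : ℝ) • α i) : ℝ) : ℂ)
            - lam (∑ i, (c i : ℝ) • α i)‖ := by
  obtain ⟨ε, hε, hcone⟩ := exists_pos_mul_sum_le_norm_sum_smul ρ α hρ
  obtain ⟨B, hB⟩ := isBounded_iff_forall_norm_le.mp hK.isBounded
  refine ⟨ε ^ 2 / 4, by positivity, ⌈4 * (‖ρ‖ + B) / ε⌉₊, fun lam hlam c hM => ?_⟩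
  set μ := ∑ i, (c i : ℝ) • α i
  have hn : ε * ((∑ i, c i : ℕ) : ℝ) ≤ ‖μ‖ := by
    push_cast
    exact hcone _ fun i => Nat.cast_nonneg (c i)
  have hlarge : 4 * (‖ρ‖ + B) ≤ ε * ((∑ i, c i : ℕ) : ℝ) := by
    rw [mul_comm ε, ← div_le_iff₀ hε]
    exact Nat.ceil_le.mp hM
  calc ε ^ 2 / 4 * ((∑ i, c i : ℕ) : ℝ) ^ 2 = (ε * ((∑ i, c i : ℕ) : ℝ)) ^ 2 / 4 := by ring
    _ ≤ ‖μ‖ ^ 2 / 4 := by gcongr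
    _ ≤ _ := norm_sq_div_four_le_norm_half_inner_self_sub ρ μ lam
        (by linarith [hB lam hlam])

/-- Let `E` be a finite-dimensional real inner product space,
`α_1,…,α_r ∈ E`, `ρ ∈ E` with `(ρ, α_i) > 0` for all `i`, and `K` a compact set of
`ℝ`-linear maps `E → ℂ` (continuous linear maps, with the operator norm topology).
Then there are constants `C > 0` and `M ∈ ℕ` such that for every `λ ∈ K` and every
`μ = Σ c_i α_i` with `c_i ∈ ℕ₀` and `n := Σ c_i ≥ M`, one has
`|½(μ,μ) − (ρ,μ) − λ(μ)| ≥ C·n²`. -/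
theorem stmt6 {E : Type} [NormedAddCommGroup E] [InnerProductSpace ℝ E]
    [FiniteDimensional ℝ E]
    {r : ℕ} (α : Fin r → E) (ρ : E) (hρ : ∀ i, 0 < (inner ℝ ρ (α i) : ℝ))
    (K : Set (E →L[ℝ] ℂ)) (hK : IsCompact K) :
    ∃ C > (0 : ℝ), ∃ M : ℕ,
      ∀ lam ∈ K, ∀ c : Fin r → ℕ, M ≤ ∑ i, c i →
        C * ((∑ i, c i : ℕ) : ℝ) ^ 2 ≤
          ‖(1/2 : ℂ) *
              ((inner ℝ (∑ i, (c i : ℝ) • α i) (∑ i, (c i : ℝ) • α i) : ℝ) : ℂ)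
            - ((inner ℝ ρ (∑ i, (c i : ℝ) • α i) : ℝ) : ℂ)
            - lam (∑ i, (c i : ℝ) • α i)‖ :=
  stmt6_general α ρ hρ K hK
end

section
/- For every compact set K ⊆ ℂ ∖ P_λ there is a constant C_p > 0 such that for every n ∈ ℕ, every sequence β_1,…,β_n ∈ Δ̂⁺, and every ħ ∈ K, one has ∏_{j=1}^{n} |p_{iλ/ħ}(β_j + β_{j+1} + ⋯ + β_n)|^{−1} ≤ C_p^n / (n!)². -/
/-!
If `μ` is a sum of `m` elements of `Δ̂⁺`, then `(ρ, μ) ≥ a m` with `a = min_β (ρ, β) > 0`, so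
`‖μ‖ ≥ κ m`. Since `K` stays away from `0`, `|p_{iλ/ħ}(μ)| ≥ ½‖μ‖² − L‖μ‖` uniformly for `ħ ∈ K`,
hence `|p_{iλ/ħ}(μ)| ≥ κ² m² / 4` as soon as `‖μ‖ ≥ 4L`. The remaining sums have boundedly many
terms, so they form a finite set, on which `|p_{iλ/ħ}|` is bounded below on `K` by compactness
because `K` avoids `P_λ`. So each factor is at most `C / (n - j)²`, and the product is at most
`C^n / (n!)²`.
-/

open Finset Filter Topology
open scoped RealInnerProductSpace Nat

lemma Multiset.finite_setOf_sum_of_card_le {M : Type*} [AddCommMonoid M] (Δ : Finset M) (N : ℕ) :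
    {μ | ∃ t : Multiset M, Multiset.card t ≤ N ∧ (∀ x ∈ t, x ∈ Δ) ∧ t.sum = μ}.Finite := by
  classical
  refine ((Set.finite_Iic (N • Δ.val)).image Multiset.sum).subset ?_
  rintro _ ⟨t, htN, htΔ, rfl⟩
  refine ⟨t, Multiset.le_iff_count.2 fun x => ?_, rfl⟩
  by_cases hx : x ∈ t
  · rw [Multiset.count_nsmul, Multiset.count_eq_one_of_mem Δ.nodup (htΔ x hx), mul_one]
    exact (Multiset.count_le_card x t).trans htN
  · simp [Multiset.count_eq_zero.2 hx]

lemma prod_inv_le_pow_div_factorial_sq {C : ℝ} {n : ℕ} {x : ℕ → ℝ} (hx0 : ∀ j < n, 0 ≤ x j)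
    (hx : ∀ j < n, ((n - j : ℕ) : ℝ) ^ 2 ≤ C * x j) :
    ∏ j ∈ range n, (x j)⁻¹ ≤ C ^ n / (n ! : ℝ) ^ 2 := by
  have hterm : ∀ j ∈ range n, (x j)⁻¹ ≤ C / ((n - j : ℕ) : ℝ) ^ 2 := by
    intro j hj
    replace hj := mem_range.1 hj
    have hnj : (0 : ℝ) < ((n - j : ℕ) : ℝ) ^ 2 := by
      have : 0 < n - j := Nat.sub_pos_of_lt hj
      positivity
    have hxj : 0 < x j := (hx0 j hj).lt_of_ne fun h => by
      linarith [hx j hj, show C * x j = 0 by rw [← h, mul_zero]]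
    rw [le_div_iff₀ hnj, inv_mul_eq_div, div_le_iff₀ hxj]
    exact hx j hj
  calc ∏ j ∈ range n, (x j)⁻¹ ≤ ∏ j ∈ range n, C / ((n - j : ℕ) : ℝ) ^ 2 :=
        prod_le_prod (fun j hj => inv_nonneg.2 (hx0 j (mem_range.1 hj))) hterm
    _ = C ^ n / (n ! : ℝ) ^ 2 := by
        rw [prod_div_distrib, prod_const, card_range, prod_pow, ← Nat.cast_prod,
          ← Nat.descFactorial_eq_prod_range, Nat.descFactorial_self]

variable {E : Type*} [NormedAddCommGroup E] [InnerProductSpace ℝ E]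

lemma inner_sum_natCast_smul_pos {ι : Type*} [Fintype ι] {ρ : E} {α : ι → E}
    (hρ : ∀ i, 0 < ⟪ρ, α i⟫) {c : ι → ℕ} (hc : ∃ i, c i ≠ 0) :
    0 < ⟪ρ, ∑ i, (c i : ℝ) • α i⟫ := by
  obtain ⟨i₀, hi₀⟩ := hc
  rw [inner_sum]
  refine Finset.sum_pos' (fun i _ => ?_) ⟨i₀, mem_univ _, ?_⟩
  · rw [real_inner_smul_right]
    exact mul_nonneg (Nat.cast_nonneg _) (hρ i).le
  · rw [real_inner_smul_right]
    exact mul_pos (Nat.cast_pos.2 (Nat.pos_of_ne_zero hi₀)) (hρ i₀)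

lemma exists_pos_mul_card_le_norm_sum {Δ : Finset E} {ρ : E} (hΔ : ∀ β ∈ Δ, 0 < ⟪ρ, β⟫) :
    ∃ κ > 0, ∀ t : Multiset E, (∀ x ∈ t, x ∈ Δ) → κ * Multiset.card t ≤ ‖t.sum‖ := by
  have hsmall : ∀ᶠ a in 𝓝[>] (0 : ℝ), (∀ β ∈ Δ, a ≤ ⟪ρ, β⟫) ∧ 0 < a :=
    ((Finset.eventually_all Δ).2 fun β hβ => eventually_nhdsWithin_of_eventually_nhds
      (eventually_le_nhds (hΔ β hβ))).and self_mem_nhdsWithin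
  obtain ⟨a, haΔ, ha⟩ := hsmall.exists
  -- `‖ρ‖ + 1` rather than `‖ρ‖`, so that `ρ = 0` (possible only for `Δ = ∅`) needs no case split
  refine ⟨a / (‖ρ‖ + 1), by positivity, fun t ht => ?_⟩
  have hinner : Multiset.card t * a ≤ ⟪ρ, t.sum⟫ := by
    rw [show ⟪ρ, t.sum⟫ = (t.map (⟪ρ, ·⟫)).sum from map_multiset_sum (innerSL ℝ ρ) t,
      ← Multiset.card_map (⟪ρ, ·⟫), ← nsmul_eq_mul]
    refine Multiset.card_nsmul_le_sum fun x hx => ?_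
    obtain ⟨y, hy, rfl⟩ := Multiset.mem_map.1 hx
    exact haΔ y (ht y hy)
  rw [div_mul_eq_mul_div, div_le_iff₀ (by positivity), mul_comm a]
  calc Multiset.card t * a ≤ ⟪ρ, t.sum⟫ := hinner
    _ ≤ ‖ρ‖ * ‖t.sum‖ := real_inner_le_norm ρ t.sum
    _ ≤ ‖t.sum‖ * (‖ρ‖ + 1) := by nlinarith [norm_nonneg t.sum]

/-- The polynomial `p_{iλ/ħ}(μ) = ½(μ,μ) − (ρ,μ) − (i/ħ)λ(μ)`. -/
noncomputable def shiftedQuadratic (ρ : E) (lam : E →ₗ[ℝ] ℂ) (hbar : ℂ) (μ : E) : ℂ :=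
  (1 / 2 : ℂ) * ((⟪μ, μ⟫ : ℝ) : ℂ) - ((⟪ρ, μ⟫ : ℝ) : ℂ) - (Complex.I / hbar) * lam μ

section shiftedQuadratic

variable (ρ : E) (lam : E →ₗ[ℝ] ℂ)

lemma half_sq_sub_mul_le_norm_shiftedQuadratic {L : ℝ} (hL : ∀ v, ‖lam v‖ ≤ L * ‖v‖)
    (hbar : ℂ) (μ : E) :
    ‖μ‖ ^ 2 / 2 - (‖ρ‖ + L / ‖hbar‖) * ‖μ‖ ≤ ‖shiftedQuadratic ρ lam hbar μ‖ := by
  have hquad : ‖(1 / 2 : ℂ) * ((⟪μ, μ⟫ : ℝ) : ℂ)‖ = ‖μ‖ ^ 2 / 2 := by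
    rw [real_inner_self_eq_norm_sq, norm_mul, Complex.norm_real,
      Real.norm_of_nonneg (by positivity)]
    norm_num [div_eq_inv_mul]
  have hlin : ‖((⟪ρ, μ⟫ : ℝ) : ℂ)‖ ≤ ‖ρ‖ * ‖μ‖ := by
    rw [Complex.norm_real]
    exact norm_inner_le_norm ρ μ
  have hlam : ‖(Complex.I / hbar) * lam μ‖ ≤ L / ‖hbar‖ * ‖μ‖ := by
    rw [norm_mul, norm_div, Complex.norm_I, one_div, div_mul_eq_mul_div, inv_mul_eq_div]
    exact div_le_div_of_nonneg_right (by simpa [mul_comm] using hL μ) (norm_nonneg _)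
  calc ‖μ‖ ^ 2 / 2 - (‖ρ‖ + L / ‖hbar‖) * ‖μ‖
      ≤ ‖(1 / 2 : ℂ) * ((⟪μ, μ⟫ : ℝ) : ℂ)‖ - ‖((⟪ρ, μ⟫ : ℝ) : ℂ)‖
          - ‖(Complex.I / hbar) * lam μ‖ := by linarith
    _ ≤ ‖shiftedQuadratic ρ lam hbar μ‖ :=
      (sub_le_sub_right (norm_sub_norm_le _ _) _).trans (norm_sub_norm_le _ _)

variable [FiniteDimensional ℝ E]

lemma exists_half_sq_sub_mul_le_norm_shiftedQuadratic {K : Set ℂ} (hK : IsCompact K)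
    (hK0 : 0 ∉ K) :
    ∃ L, ∀ hbar ∈ K, ∀ μ, ‖μ‖ ^ 2 / 2 - L * ‖μ‖ ≤ ‖shiftedQuadratic ρ lam hbar μ‖ := by
  obtain ⟨δ, hδ, hδK⟩ := hK.exists_forall_le' continuous_norm.continuousOn
    (a := 0) fun hbar h => norm_pos_iff.2 (ne_of_mem_of_not_mem h hK0)
  set f := LinearMap.toContinuousLinearMap lam
  refine ⟨‖ρ‖ + ‖f‖ / δ, fun hbar hbarK μ => le_trans ?_
    (half_sq_sub_mul_le_norm_shiftedQuadratic ρ lam (fun v => f.le_opNorm v) hbar μ)⟩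
  gcongr
  exact hδK hbar hbarK

lemma continuousOn_shiftedQuadratic :
    ContinuousOn (fun q : ℂ × E => shiftedQuadratic ρ lam q.1 q.2) ({0}ᶜ ×ˢ Set.univ) := by
  have hlam : Continuous lam := lam.continuous_of_finiteDimensional
  refine (Continuous.continuousOn (by fun_prop)).sub (ContinuousOn.mul ?_ (by fun_prop))
  exact continuousOn_const.div continuous_fst.continuousOn fun q hq => hq.1

lemma exists_pos_le_norm_shiftedQuadratic {K : Set ℂ} (hK : IsCompact K) (hK0 : 0 ∉ K)
    {S : Set E} (hS : S.Finite) (hKS : ∀ hbar ∈ K, ∀ μ ∈ S, shiftedQuadratic ρ lam hbar μ ≠ 0) :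
    ∃ ε > 0, ∀ hbar ∈ K, ∀ μ ∈ S, ε ≤ ‖shiftedQuadratic ρ lam hbar μ‖ := by
  have hsub : K ×ˢ S ⊆ {0}ᶜ ×ˢ Set.univ :=
    Set.prod_mono (fun _ h h0 => hK0 (h0 ▸ h)) (Set.subset_univ _)
  obtain ⟨ε, hε, hεKS⟩ := (hK.prod hS.isCompact).exists_forall_le'
    (continuous_norm.comp_continuousOn ((continuousOn_shiftedQuadratic ρ lam).mono hsub))
    fun q hq => norm_pos_iff.2 (hKS q.1 hq.1 q.2 hq.2)
  exact ⟨ε, hε, fun hbar hbarK μ hμ => hεKS (hbar, μ) ⟨hbarK, hμ⟩⟩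

theorem exists_sq_card_le_mul_norm_shiftedQuadratic {Δ : Finset E}
    (hΔ : ∀ β ∈ Δ, 0 < ⟪ρ, β⟫) {K : Set ℂ} (hK : IsCompact K) (hK0 : 0 ∉ K)
    (hKΔ : ∀ hbar ∈ K, ∀ t : Multiset E, (∀ x ∈ t, x ∈ Δ) → t.sum ≠ 0 →
      shiftedQuadratic ρ lam hbar t.sum ≠ 0) :
    ∃ C > 0, ∀ hbar ∈ K, ∀ t : Multiset E, (∀ x ∈ t, x ∈ Δ) →
      (Multiset.card t : ℝ) ^ 2 ≤ C * ‖shiftedQuadratic ρ lam hbar t.sum‖ := by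
  obtain ⟨κ, hκ, hκΔ⟩ := exists_pos_mul_card_le_norm_sum hΔ
  obtain ⟨L, hL⟩ := exists_half_sq_sub_mul_le_norm_shiftedQuadratic ρ lam hK hK0
  -- a sum `μ` with `‖μ‖ < 4L` has at most `N` terms
  set N := ⌊4 * L / κ⌋₊
  set S := {μ | ∃ t : Multiset E, Multiset.card t ≤ N ∧ (∀ x ∈ t, x ∈ Δ) ∧ t.sum = μ} \ {0}
  obtain ⟨ε, hε, hεS⟩ := exists_pos_le_norm_shiftedQuadratic ρ lam hK hK0
    (S := S) (Multiset.finite_setOf_sum_of_card_le Δ N).sdiff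
    fun hbar hbarK _ ⟨⟨t, _, ht, hts⟩, ht0⟩ => hts ▸ hKΔ hbar hbarK t ht (hts ▸ ht0)
  refine ⟨4 / κ ^ 2 + N ^ 2 / ε, by positivity, fun hbar hbarK t ht => ?_⟩
  set P := ‖shiftedQuadratic ρ lam hbar t.sum‖
  have hm : κ * Multiset.card t ≤ ‖t.sum‖ := hκΔ t ht
  suffices (Multiset.card t : ℝ) ^ 2 ≤ 4 / κ ^ 2 * P ∨ (Multiset.card t : ℝ) ^ 2 ≤ N ^ 2 / ε * P by
    have hP : 0 ≤ P := norm_nonneg _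
    rw [add_mul]
    rcases this with h | h
    · exact h.trans (le_add_of_nonneg_right (by positivity))
    · exact h.trans (le_add_of_nonneg_left (by positivity))
  rcases le_or_gt (4 * L) ‖t.sum‖ with hbig | hsmall
  · left
    have hquarter : ‖t.sum‖ ^ 2 / 4 ≤ P := by
      nlinarith [hL hbar hbarK t.sum, norm_nonneg t.sum]
    have hκm : (κ * Multiset.card t) ^ 2 ≤ ‖t.sum‖ ^ 2 := pow_le_pow_left₀ (by positivity) hm 2
    rw [div_mul_eq_mul_div, le_div_iff₀ (by positivity)]
    linarith
  · right
    rcases eq_or_ne t.sum 0 with h0 | h0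
    · rw [h0, norm_zero] at hm
      have hcard : (Multiset.card t : ℝ) = 0 :=
        le_antisymm (nonpos_of_mul_nonpos_right hm hκ) (by positivity)
      rw [hcard, zero_pow two_ne_zero]
      positivity
    have hcard : Multiset.card t ≤ N := Nat.le_floor (by rw [le_div_iff₀ hκ]; linarith)
    have hεP : ε ≤ P := hεS hbar hbarK t.sum ⟨⟨t, hcard, ht, rfl⟩, h0⟩
    calc (Multiset.card t : ℝ) ^ 2 ≤ N ^ 2 / ε * ε := by
          rw [div_mul_cancel₀ _ hε.ne']
          gcongr
      _ ≤ N ^ 2 / ε * P := by gcongr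

end shiftedQuadratic

theorem stmt7_general {E : Type} [NormedAddCommGroup E] [InnerProductSpace ℝ E]
    [FiniteDimensional ℝ E]
    {r : ℕ} (α : Fin r → E) (ρ : E) (hρ : ∀ i, 0 < (inner ℝ ρ (α i) : ℝ))
    (Δhat : Finset E)
    (hΔ : ∀ β ∈ Δhat, ∃ c : Fin r → ℕ, (∃ i, c i ≠ 0) ∧ β = ∑ i, (c i : ℝ) • α i)
    (lam : E →ₗ[ℝ] ℂ)
    (p : ℂ → E → ℂ)
    (hp : ∀ hbar μ, p hbar μ = (1/2 : ℂ) * ((inner ℝ μ μ : ℝ) : ℂ) - ((inner ℝ ρ μ : ℝ) : ℂ)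
        - (Complex.I / hbar) * lam μ)
    (NΔ : Set E)
    (hNΔ : NΔ = {μ | ∃ c : E → ℕ, μ = ∑ β ∈ Δhat, (c β : ℝ) • β})
    (P : Set ℂ)
    (hP : P = {0} ∪ {hbar | hbar ≠ 0 ∧ ∃ μ ∈ NΔ, μ ≠ 0 ∧ p hbar μ = 0})
    (K : Set ℂ) (hK : IsCompact K) (hKP : K ∩ P = ∅) :
    ∃ C > (0 : ℝ), ∀ n : ℕ, ∀ β : ℕ → E, (∀ j < n, β j ∈ Δhat) → ∀ hbar ∈ K,
      ∏ j ∈ Finset.range n, ‖p hbar (∑ i ∈ Finset.Ico j n, β i)‖⁻¹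
        ≤ C ^ n / ((n.factorial : ℝ)) ^ 2 := by
  classical
  obtain rfl : p = shiftedQuadratic ρ lam := funext₂ hp
  subst hNΔ hP
  have hΔρ : ∀ β ∈ Δhat, 0 < ⟪ρ, β⟫ := fun β hβ => by
    obtain ⟨c, hc, rfl⟩ := hΔ β hβ
    exact inner_sum_natCast_smul_pos hρ hc
  have hK0 : (0 : ℂ) ∉ K := fun h0 => hKP.subset ⟨h0, Or.inl rfl⟩
  have hsum_mem : ∀ t : Multiset E, (∀ x ∈ t, x ∈ Δhat) →
      ∃ c : E → ℕ, t.sum = ∑ β ∈ Δhat, (c β : ℝ) • β := fun t ht => by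
    refine ⟨fun β => t.count β, ?_⟩
    simp_rw [Nat.cast_smul_eq_nsmul]
    exact sum_multiset_count_of_subset t Δhat fun x hx => ht x (Multiset.mem_toFinset.1 hx)
  obtain ⟨C, hC, hbound⟩ := exists_sq_card_le_mul_norm_shiftedQuadratic ρ lam hΔρ hK hK0
    fun hbar hbarK t ht ht0 hzero => hKP.subset ⟨hbarK, Or.inr
      ⟨ne_of_mem_of_not_mem hbarK hK0, t.sum, hsum_mem t ht, ht0, hzero⟩⟩
  refine ⟨C, hC, fun n β hβ hbar hbarK =>
    prod_inv_le_pow_div_factorial_sq (fun _ _ => norm_nonneg _) fun j hj => ?_⟩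
  have hmem : ∀ x ∈ (Ico j n).val.map β, x ∈ Δhat := fun x hx => by
    obtain ⟨i, hi, rfl⟩ := Multiset.mem_map.1 hx
    exact hβ i (mem_Ico.1 hi).2
  simpa using hbound hbar hbarK _ hmem

/-- In the setting of the paper (with `Δ̂⁺` a finite set of nonzero
vectors, each an `ℕ₀`-combination of `α_1,…,α_r` with a nonzero coefficient,
`(ρ, α_i) > 0`, `λ : E → ℂ` `ℝ`-linear, `p_{iλ/ħ}(μ) = ½(μ,μ) − (ρ,μ) − (i/ħ)λ(μ)` and
`P_λ = {0} ∪ {ħ ≠ 0 : p_{iλ/ħ}(μ) = 0 for some μ ∈ ℕ₀Δ̂⁺ ∖ {0}}`):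
for every compact `K ⊆ ℂ ∖ P_λ` there is `C_p > 0` such that for every `n`, every
sequence `β_1,…,β_n ∈ Δ̂⁺` and every `ħ ∈ K`,
`∏_{j=1}^n |p_{iλ/ħ}(β_j + ⋯ + β_n)|⁻¹ ≤ C_p^n / (n!)²`. -/
theorem stmt7 {E : Type} [NormedAddCommGroup E] [InnerProductSpace ℝ E]
    [FiniteDimensional ℝ E]
    {r : ℕ} (α : Fin r → E) (ρ : E) (hρ : ∀ i, 0 < (inner ℝ ρ (α i) : ℝ))
    (Δhat : Finset E) (hΔ0 : (0 : E) ∉ Δhat)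
    (hΔ : ∀ β ∈ Δhat, ∃ c : Fin r → ℕ, (∃ i, c i ≠ 0) ∧ β = ∑ i, (c i : ℝ) • α i)
    (lam : E →ₗ[ℝ] ℂ)
    (p : ℂ → E → ℂ)
    (hp : ∀ hbar μ, p hbar μ = (1/2 : ℂ) * ((inner ℝ μ μ : ℝ) : ℂ) - ((inner ℝ ρ μ : ℝ) : ℂ)
        - (Complex.I / hbar) * lam μ)
    (NΔ : Set E)
    (hNΔ : NΔ = {μ | ∃ c : E → ℕ, μ = ∑ β ∈ Δhat, (c β : ℝ) • β})
    (P : Set ℂ)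
    (hP : P = {0} ∪ {hbar | hbar ≠ 0 ∧ ∃ μ ∈ NΔ, μ ≠ 0 ∧ p hbar μ = 0})
    (K : Set ℂ) (hK : IsCompact K) (hKP : K ∩ P = ∅) :
    ∃ C > (0 : ℝ), ∀ n : ℕ, ∀ β : ℕ → E, (∀ j < n, β j ∈ Δhat) → ∀ hbar ∈ K,
      ∏ j ∈ Finset.range n, ‖p hbar (∑ i ∈ Finset.Ico j n, β i)‖⁻¹
        ≤ C ^ n / ((n.factorial : ℝ)) ^ 2 :=
  stmt7_general α ρ hρ Δhat hΔ lam p hp NΔ hNΔ P hP K hK hKP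
end

section
/- Let 𝔤 be a Lie subalgebra of the matrix Lie algebra gl_N(ℂ) (N×N complex matrices with the commutator bracket) which is semisimple as an abstract complex Lie algebra. If X ∈ 𝔤 is such that the adjoint endomorphism ad X : 𝔤 → 𝔤, Y ↦ [X,Y], is nilpotent, then X is a nilpotent matrix. -/
attribute [local instance 100] LieRing.ofAssociativeRing

/-!
Since `ad X` is nilpotent, each generalized eigenspace of `X` is a `𝔤`-submodule. On the
`μ`-eigenspace `X` acts with trace `μ · dim`, whereas every element of the perfect Lie algebra
`𝔤 = [𝔤, 𝔤]` acts with trace zero; so only the eigenvalue `μ = 0` occurs.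
-/

open LinearMap Module

lemma LieAlgebra.IsSemisimple.lowerCentralSeries_one_eq_top (R L : Type*) [CommRing R]
    [LieRing L] [LieAlgebra R L] [LieAlgebra.IsSemisimple R L] :
    LieModule.lowerCentralSeries R L L 1 = ⊤ := by
  rw [LieModule.lowerCentralSeries_succ, LieModule.lowerCentralSeries_zero, eq_top_iff]
  refine IsSemisimple.sSup_atoms_eq_top.ge.trans <| sSup_le fun I hI ↦ ?_
  calc I = ⁅I, I⁆ :=
        (lie_eq_self_of_isAtom_of_nonabelian I hI (IsSemisimple.non_abelian_of_isAtom I hI)).symm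
    _ ≤ ⁅⊤, ⊤⁆ := LieSubmodule.mono_lie le_top le_top

namespace Module.End

variable {K V : Type*} [Field K] [AddCommGroup V] [Module K V] [FiniteDimensional K V]

lemma isNilpotent_of_forall_ne_zero_maxGenEigenspace_eq_bot [IsAlgClosed K] {f : End K V}
    (h : ∀ μ ≠ 0, f.maxGenEigenspace μ = ⊥) : IsNilpotent f := by
  have htop : f.maxGenEigenspace 0 = ⊤ := by
    refine eq_top_iff.mpr <| f.iSup_maxGenEigenspace_eq_top ▸ iSup_le fun μ ↦ ?_
    rcases eq_or_ne μ 0 with rfl | hμ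
    · exact le_rfl
    · exact h μ hμ ▸ bot_le
  refine ((LinearMap.charpoly_nilpotent_tfae f).out 0 2).mpr fun v ↦ ?_
  simpa using (f.mem_maxGenEigenspace 0 v).mp (htop ▸ Submodule.mem_top)

end Module.End

namespace LieModule

variable {K L M : Type*} [Field K] [LieRing L] [LieAlgebra K L]
  [AddCommGroup M] [Module K M] [LieRingModule L M] [LieModule K L M]

def maxGenEigenspaceOfIsNilpotentAd {x : L} (hx : _root_.IsNilpotent (LieAlgebra.ad K L x))
    (μ : K) : LieSubmodule K L M where
  __ := (toEnd K L M x).maxGenEigenspace μ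
  lie_mem {y m} hm := by
    have hy : y ∈ (toEnd K L L x).maxGenEigenspace 0 := by
      obtain ⟨n, hn⟩ := hx
      refine (Module.End.mem_maxGenEigenspace _ _ _).mpr ⟨n, ?_⟩
      simp only [zero_smul, sub_zero]
      exact congr($hn y)
    simpa using lie_mem_maxGenEigenspace_toEnd hy hm

lemma trace_toEnd_maxGenEigenspaceOfIsNilpotentAd [FiniteDimensional K M] {x : L}
    (hx : _root_.IsNilpotent (LieAlgebra.ad K L x)) (μ : K) :
    trace K _ (toEnd K L (maxGenEigenspaceOfIsNilpotentAd (M := M) hx μ) x) =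
      finrank K (maxGenEigenspaceOfIsNilpotentAd (M := M) hx μ) • μ := by
  have hnil : _root_.IsNilpotent (toEnd K L (maxGenEigenspaceOfIsNilpotentAd (M := M) hx μ) x -
      algebraMap K _ μ) :=
    (toEnd K L M x).isNilpotent_restrict_maxGenEigenspace_sub_algebraMap μ
  rw [Module.algebraMap_end_eq_smul_id] at hnil
  rw [← sub_eq_zero, ← (isNilpotent_trace_of_isNilpotent hnil).eq_zero, map_sub, map_smul,
    trace_id, smul_eq_mul, mul_comm, nsmul_eq_mul]

theorem isNilpotent_toEnd_of_isNilpotent_ad [CharZero K] [IsAlgClosed K] [FiniteDimensional K M]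
    {x : L} (hx : _root_.IsNilpotent (LieAlgebra.ad K L x))
    (hx_lcs : x ∈ lowerCentralSeries K L L 1) :
    _root_.IsNilpotent (toEnd K L M x) := by
  refine Module.End.isNilpotent_of_forall_ne_zero_maxGenEigenspace_eq_bot fun μ hμ ↦ ?_
  have htrace := trace_toEnd_maxGenEigenspaceOfIsNilpotentAd (M := M) hx μ
  rw [trace_toEnd_eq_zero_of_mem_lcs K L _ le_rfl hx_lcs, eq_comm, smul_eq_zero] at htrace
  exact Submodule.finrank_eq_zero.mp (htrace.resolve_right hμ)

end LieModule

theorem stmt11_general {N : ℕ}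
    (g : LieSubalgebra ℂ (Matrix (Fin N) (Fin N) ℂ))
    [LieAlgebra.IsSemisimple ℂ g]
    (X : g) (hX : IsNilpotent (LieAlgebra.ad ℂ g X)) :
    IsNilpotent (X : Matrix (Fin N) (Fin N) ℂ) := by
  have hperfect : X ∈ LieModule.lowerCentralSeries ℂ g g 1 :=
    LieAlgebra.IsSemisimple.lowerCentralSeries_one_eq_top ℂ g ▸ LieSubmodule.mem_top X
  -- `X` acts on `Fin N → ℂ` by `mulVec`, which is `Matrix.toLin' X` by definition.
  have hnil : IsNilpotent (Matrix.toLinAlgEquiv' (X : Matrix (Fin N) (Fin N) ℂ)) :=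
    LieModule.isNilpotent_toEnd_of_isNilpotent_ad (M := Fin N → ℂ) hX hperfect
  exact (IsNilpotent.map_iff Matrix.toLinAlgEquiv'.injective).mp hnil

/-- Let `𝔤` be a Lie subalgebra of `gl_N(ℂ)` (the `N×N` complex
matrices with the commutator bracket) which is semisimple as an abstract complex
Lie algebra.  If `X ∈ 𝔤` is such that `ad X : 𝔤 → 𝔤` is nilpotent, then `X` is a
nilpotent matrix. -/
theorem stmt11 {N : ℕ}
    (g : LieSubalgebra ℂ (Matrix (Fin N) (Fin N) ℂ))
    [FiniteDimensional ℂ g] [LieAlgebra.IsSemisimple ℂ g]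
    (X : g) (hX : IsNilpotent (LieAlgebra.ad ℂ g X)) :
    IsNilpotent (X : Matrix (Fin N) (Fin N) ℂ) :=
  stmt11_general g X hX
end

section
/- Let 𝔫 be a Lie subalgebra of gl_N(ℂ) all of whose elements are nilpotent matrices. For X ∈ gl_N(ℂ) and a differentiable function f : ℂ^{N×N} → ℂ define the left-invariant derivative (X^L f)(g) := Df(g)[g·X], the directional derivative of f at the matrix g in the direction of the matrix product g·X. Then for every polynomial function p on ℂ^{N×N} there exists N_p ∈ ℕ such that for every M > N_p and all X_1,…,X_M ∈ 𝔫 one has X_1^L ( X_2^L ( ⋯ (X_M^L p) ⋯ ) ) = 0 identically on ℂ^{N×N}. -/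
/-- The left-invariant derivative `(X^L f)(g) = Df(g)[g·X]` of a function
`f : ℂ^{N×N} → ℂ` in the direction of the matrix `X` (here `ℂ^{N×N}` is realized
as `Fin N → Fin N → ℂ`, and `g·X` is the matrix product). -/
noncomputable def Lder {N : ℕ} (X : Fin N → Fin N → ℂ)
    (f : (Fin N → Fin N → ℂ) → ℂ) : (Fin N → Fin N → ℂ) → ℂ :=
  fun g => fderiv ℂ f g (Matrix.of.symm (Matrix.of g * Matrix.of X))

/-- Iterated left-invariant derivatives: `LderList [X_1,…,X_M] f = X_1^L(X_2^L(⋯(X_M^L f)⋯))`. -/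
noncomputable def LderList {N : ℕ} (l : List (Fin N → Fin N → ℂ))
    (f : (Fin N → Fin N → ℂ) → ℂ) : (Fin N → Fin N → ℂ) → ℂ :=
  l.foldr Lder f

attribute [local instance 100] LieRing.ofAssociativeRing

/-! On polynomial functions, `X^L` acts as the derivation of `ℂ[g_ij]` sending the generic matrix
`G` to `G X`, so `X_1^L ⋯ X_M^L` sends `G` to `G X_1 ⋯ X_M`. By Engel's theorem all products of
`k` elements of `𝔫` vanish for some `k`, so every coordinate function is killed by any `k + 1` of
these derivations. By the Leibniz rule the functions killed by all sufficiently long compositions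
form a subalgebra, which therefore contains every polynomial. -/

open MvPolynomial

namespace Derivation

variable {R A ι : Type*} [CommSemiring R] [CommSemiring A] [Algebra R A]
  (D : ι → Derivation R A A) (S : Set ι)

def IsKilledBeyond (m : ℕ) (a : A) : Prop :=
  ∀ l : List ι, (∀ i ∈ l, i ∈ S) → m < l.length →
    (l.map fun i => (D i : Module.End R A)).prod a = 0

variable {D S} {m m' : ℕ} {a b : A}

theorem IsKilledBeyond.mono (h : IsKilledBeyond D S m a) (hm : m ≤ m') :
    IsKilledBeyond D S m' a :=
  fun l hl hlen => h l hl (hm.trans_lt hlen)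

theorem IsKilledBeyond.add (ha : IsKilledBeyond D S m a) (hb : IsKilledBeyond D S m b) :
    IsKilledBeyond D S m (a + b) := by
  intro l hl hlen
  rw [map_add, ha l hl hlen, hb l hl hlen, add_zero]

theorem IsKilledBeyond.apply_eq_zero (h : IsKilledBeyond D S 0 a) {i : ι} (hi : i ∈ S) :
    D i a = 0 := by
  simpa using h [i] (by simpa using hi) (by simp)

theorem IsKilledBeyond.apply (h : IsKilledBeyond D S (m + 1) a) {i : ι} (hi : i ∈ S) :
    IsKilledBeyond D S m (D i a) := by
  intro l hl hlen
  simpa using h (l ++ [i]) (by simpa [or_imp, forall_and] using ⟨hl, hi⟩) (by simpa using hlen)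

theorem isKilledBeyond_algebraMap (r : R) : IsKilledBeyond D S 0 (algebraMap R A r) := by
  intro l _ hlen
  obtain ⟨l, i, rfl⟩ := (List.eq_nil_or_concat l).resolve_left (by rintro rfl; simp at hlen)
  simp

theorem IsKilledBeyond.mul (ha : IsKilledBeyond D S m a) (hb : IsKilledBeyond D S m' b) :
    IsKilledBeyond D S (m + m') (a * b) := by
  intro l hl hlen
  induction l using List.reverseRecOn generalizing a b m m' with
  | nil => simp at hlen
  | append_singleton l i ih =>
    have hi : i ∈ S := hl i (by simp)
    have hl' : ∀ j ∈ l, j ∈ S := fun j hj => hl j (by simp [hj])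
    have key : ∀ {a b : A} {m m' : ℕ}, IsKilledBeyond D S m a → IsKilledBeyond D S m' b →
        m + m' ≤ l.length → (l.map fun i => (D i : Module.End R A)).prod (a * D i b) = 0 := by
      intro a b m m' ha hb hmm'
      rcases m' with _ | m'
      · rw [hb.apply_eq_zero hi, mul_zero, map_zero]
      · exact ih ha (hb.apply hi) hl' (by omega)
    simp only [List.length_append, List.length_singleton] at hlen
    simp only [List.map_append, List.map_singleton, List.prod_append, List.prod_singleton,
      Module.End.mul_apply, coeFn_coe, leibniz, smul_eq_mul, map_add]
    rw [key ha hb (by omega), key hb ha (by omega), add_zero]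

variable (D S) in
def killedSubalgebra : Subalgebra R A where
  carrier := {a | ∃ m, IsKilledBeyond D S m a}
  mul_mem' := fun ⟨m, ha⟩ ⟨m', hb⟩ => ⟨m + m', ha.mul hb⟩
  add_mem' := fun ⟨m, ha⟩ ⟨m', hb⟩ =>
    ⟨max m m', (ha.mono (le_max_left m m')).add (hb.mono (le_max_right m m'))⟩
  algebraMap_mem' r := ⟨0, isKilledBeyond_algebraMap r⟩

end Derivation

theorem LieModule.foldr_lie_mem_lowerCentralSeries {R L M : Type*} [CommRing R] [LieRing L]
    [LieAlgebra R L] [AddCommGroup M] [Module R M] [LieRingModule L M] [LieModule R L M]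
    (K : LieSubalgebra R L) (l : List L) (hl : ∀ x ∈ l, x ∈ K) (m : M) :
    l.foldr (fun x v => ⁅x, v⁆) m ∈ lowerCentralSeries R K M l.length := by
  induction l with
  | nil => simp
  | cons x l ih =>
    rw [List.foldr_cons, List.length_cons, lowerCentralSeries_succ]
    exact LieSubmodule.lie_mem_lie (x := (⟨x, hl x (by simp)⟩ : K)) (LieSubmodule.mem_top _)
      (ih fun y hy => hl y (by simp [hy]))

namespace Matrix

section LeftInvariantDerivation

variable {ι K : Type*} [Fintype ι] [CommSemiring K]

noncomputable def leftInvariantDerivation (X : Matrix ι ι K) :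
    Derivation K (MvPolynomial (ι × ι) K) (MvPolynomial (ι × ι) K) :=
  mkDerivation K fun s => (mvPolynomialX ι ι K * X.map C : Matrix ι ι _) s.1 s.2

theorem leftInvariantDerivation_mvPolynomialX_mul (X M : Matrix ι ι K) (i j : ι) :
    leftInvariantDerivation X ((mvPolynomialX ι ι K * M.map C : Matrix ι ι _) i j) =
      (mvPolynomialX ι ι K * (X * M).map C : Matrix ι ι _) i j := by
  rw [Matrix.map_mul, ← Matrix.mul_assoc, mul_apply, mul_apply, map_sum]
  refine Finset.sum_congr rfl fun k _ => ?_
  simp [leftInvariantDerivation, mkDerivation_X, mul_comm]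

theorem list_prod_leftInvariantDerivation_X [DecidableEq ι] (l : List (Matrix ι ι K))
    (s : ι × ι) :
    (l.map fun X => (leftInvariantDerivation X : Module.End K (MvPolynomial (ι × ι) K))).prod
      (X s) = (mvPolynomialX ι ι K * l.prod.map C : Matrix ι ι _) s.1 s.2 := by
  induction l with
  | nil => simp [Matrix.map_one _ (map_zero C) (map_one C)]
  | cons X l ih =>
    rw [List.map_cons, List.prod_cons, Module.End.mul_apply, ih, Derivation.coeFn_coe,
      leftInvariantDerivation_mvPolynomialX_mul, List.prod_cons]

end LeftInvariantDerivation

section Engel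

variable {ι K : Type*} [Fintype ι] [DecidableEq ι]

theorem list_prod_mulVec_eq_foldr_lie {R : Type*} [CommRing R] (l : List (Matrix ι ι R))
    (v : ι → R) :
    l.prod *ᵥ v = l.foldr (fun X w => ⁅X, w⁆) v := by
  induction l with
  | nil => simp
  | cons X l ih => rw [List.prod_cons, ← mulVec_mulVec, ih, List.foldr_cons, lie_apply]

theorem exists_list_prod_eq_zero_of_isNilpotent [Field K] (n : LieSubalgebra K (Matrix ι ι K))
    (hn : ∀ X ∈ n, IsNilpotent X) :
    ∃ k, ∀ l : List (Matrix ι ι K), (∀ X ∈ l, X ∈ n) → k ≤ l.length → l.prod = 0 := by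
  have : LieModule.IsNilpotent n (ι → K) := by
    refine (LieModule.isNilpotent_iff_forall' (R := K)).2 fun X => ?_
    have hX : LieModule.toEnd K n (ι → K) X = toLin' (X : Matrix ι ι K) := by ext; rfl
    rw [hX]
    exact (hn X X.2).map toLinAlgEquiv'
  obtain ⟨k, hk⟩ := LieModule.IsNilpotent.nilpotent K n (ι → K)
  refine ⟨k, fun l hl hlen => ext_iff_mulVec.2 fun v => ?_⟩
  have hmem := LieModule.antitone_lowerCentralSeries K n (ι → K) hlen
    (LieModule.foldr_lie_mem_lowerCentralSeries n l hl v)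
  rw [hk, LieSubmodule.mem_bot] at hmem
  rw [list_prod_mulVec_eq_foldr_lie, hmem, zero_mulVec]

end Engel

end Matrix

def entryCLM {𝕜 ι : Type*} [NontriviallyNormedField 𝕜] (i j : ι) : (ι → ι → 𝕜) →L[𝕜] 𝕜 :=
  (ContinuousLinearMap.proj (R := 𝕜) (φ := fun _ : ι => 𝕜) j).comp
    (ContinuousLinearMap.proj (R := 𝕜) (φ := fun _ : ι => ι → 𝕜) i)

@[simp] theorem entryCLM_apply {𝕜 ι : Type*} [NontriviallyNormedField 𝕜] (i j : ι)
    (g : ι → ι → 𝕜) : entryCLM i j g = g i j := rfl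

theorem differentiable_eval_entries {ι : Type*} [Fintype ι] (p : MvPolynomial (ι × ι) ℂ) :
    Differentiable ℂ fun g : ι → ι → ℂ => eval (fun ij => g ij.1 ij.2) p := fun g =>
  (AnalyticOnNhd.eval_continuousLinearMap' (𝕜 := ℂ) (B := ℂ)
    (fun ij : ι × ι => entryCLM ij.1 ij.2) p g trivial).differentiableAt

theorem lder_eval_entries {N : ℕ} (X : Fin N → Fin N → ℂ) (p : MvPolynomial (Fin N × Fin N) ℂ) :
    Lder X (fun g => eval (fun ij => g ij.1 ij.2) p) =
      fun g => eval (fun ij => g ij.1 ij.2) (Matrix.leftInvariantDerivation (Matrix.of X) p) := by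
  funext g
  induction p using MvPolynomial.induction_on with
  | C a => simp [Lder]
  | add p q hp hq =>
    simp only [Lder, map_add] at hp hq ⊢
    rw [fderiv_fun_add (differentiable_eval_entries p g) (differentiable_eval_entries q g),
      add_apply, hp, hq]
  | mul_X p s hp =>
    have hs : HasFDerivAt (fun g : Fin N → Fin N → ℂ => g s.1 s.2) (entryCLM s.1 s.2) g :=
      (entryCLM (𝕜 := ℂ) s.1 s.2).hasFDerivAt
    simp only [Lder, map_mul, eval_X] at hp ⊢
    rw [fderiv_fun_mul (differentiable_eval_entries p g) hs.differentiableAt, hs.fderiv]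
    simp [hp, Matrix.leftInvariantDerivation, mkDerivation_X, Matrix.mul_apply]

theorem lderList_eval_entries {N : ℕ} (l : List (Fin N → Fin N → ℂ))
    (p : MvPolynomial (Fin N × Fin N) ℂ) :
    LderList l (fun g => eval (fun ij => g ij.1 ij.2) p) = fun g => eval (fun ij => g ij.1 ij.2)
      ((l.map fun X => (Matrix.leftInvariantDerivation (Matrix.of X) :
        Module.End ℂ (MvPolynomial (Fin N × Fin N) ℂ))).prod p) := by
  induction l with
  | nil => rfl
  | cons X l ih =>
    rw [LderList, List.foldr_cons, ← LderList, ih, lder_eval_entries]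
    rfl

/-- Let `𝔫` be a Lie subalgebra of `gl_N(ℂ)` all of whose elements
are nilpotent matrices.  Then for every polynomial function `p` on `ℂ^{N×N}` there
exists `N_p ∈ ℕ` such that for every `M > N_p` and all `X_1,…,X_M ∈ 𝔫` the iterated
left-invariant derivative `X_1^L(X_2^L(⋯(X_M^L p)⋯))` vanishes identically. -/
theorem stmt16 {N : ℕ}
    (n : LieSubalgebra ℂ (Matrix (Fin N) (Fin N) ℂ))
    (hn : ∀ X ∈ n, IsNilpotent X)
    (p : MvPolynomial (Fin N × Fin N) ℂ) :
    ∃ Np : ℕ, ∀ M : ℕ, Np < M → ∀ l : List (Fin N → Fin N → ℂ),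
      l.length = M → (∀ X ∈ l, Matrix.of X ∈ n) →
      LderList l (fun g => MvPolynomial.eval (fun ij => g ij.1 ij.2) p) = 0 := by
  obtain ⟨k, hk⟩ := Matrix.exists_list_prod_eq_zero_of_isNilpotent n hn
  let K := Derivation.killedSubalgebra Matrix.leftInvariantDerivation
    (n : Set (Matrix (Fin N) (Fin N) ℂ))
  have hX (s : Fin N × Fin N) : X s ∈ K := ⟨k, fun l hl hlen => by
    rw [Matrix.list_prod_leftInvariantDerivation_X, hk l hl hlen.le]
    simp⟩
  obtain ⟨m, hm⟩ : p ∈ K :=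
    p.induction_on (fun a => K.algebraMap_mem a) (fun _ _ => add_mem)
      fun _ s hq => mul_mem hq (hX s)
  refine ⟨m, fun M hM l hlen hl => ?_⟩
  have hkill : (l.map fun X => (Matrix.leftInvariantDerivation (Matrix.of X) :
      Module.End ℂ (MvPolynomial (Fin N × Fin N) ℂ))).prod p = 0 := by
    simpa [Function.comp_def] using
      hm (l.map Matrix.of) (by simpa using hl) (by simpa [hlen] using hM)
  rw [lderList_eval_entries, hkill]
  exact funext fun _ => map_zero _
end
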